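/- arXiv:2407.02995 — 2 statements merged into one kernel-verified Lean document; each statement's English description precedes it below -/
import Mathlib

section
/- Let X be a metric space and φ : ℝ × X → X a continuous flow on X. Let x ∈ X and let y be a point of the ω-limit set of x. Then for every open neighbourhood U of y, the occupation-time set {t ∈ [0,∞) : φ(t,x) ∈ U} has infinite Lebesgue measure. -/
open MeasureTheory Set

/-- If `y` is in the ω-limit set of `x` under a continuous flow `φ` on a metric
space, then for every open neighbourhood `U` of `y`, the occupation-time set
`{t ∈ [0,∞) : φ(t,x) ∈ U}` has infinite Lebesgue measure. -/
theorem omega_limit_occupation_time_infinite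
    {X : Type*} [MetricSpace X]
    (φ : ℝ × X → X) (hφ : Continuous φ)
    (hφ0 : ∀ x : X, φ (0, x) = x)
    (hφadd : ∀ (s t : ℝ) (x : X), φ (s, φ (t, x)) = φ (s + t, x))
    (x y : X)
    (hy : y ∈ ⋂ T ∈ Ici (0 : ℝ), closure {z : X | ∃ t : ℝ, T ≤ t ∧ z = φ (t, x)})
    (U : Set X) (hU : IsOpen U) (hyU : y ∈ U) :
    volume {t : ℝ | 0 ≤ t ∧ φ (t, x) ∈ U} = ⊤ := by
  -- continuity at (0, y)
  obtain ⟨r, hr, hball⟩ := Metric.isOpen_iff.mp (hU.preimage hφ) (0, y)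
    (by simp [mem_preimage, hφ0, hyU])
  have hr2 : (0 : ℝ) < r / 2 := by linarith
  simp only [mem_iInter, mem_Ici] at hy
  -- key claim: from any time T ≥ 0 we can find t ≥ T with an interval inside U
  have claim : ∀ T : ℝ, 0 ≤ T → ∃ t, T ≤ t ∧ ∀ s ∈ Icc t (t + r / 2), φ (s, x) ∈ U := by
    intro T hT
    have hyc := hy T hT
    obtain ⟨z, hz, hdz⟩ := Metric.mem_closure_iff.mp hyc r hr
    obtain ⟨t, htT, rfl⟩ := hz
    refine ⟨t, htT, fun s hs => ?_⟩
    have h1 : φ (s - t, φ (t, x)) ∈ U := by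
      have : (s - t, φ (t, x)) ∈ Metric.ball ((0 : ℝ), y) r := by
        rw [Metric.mem_ball, Prod.dist_eq]
        simp only [Real.dist_eq, sub_zero]
        refine max_lt ?_ (by rw [dist_comm]; exact hdz)
        rw [abs_of_nonneg (by linarith [hs.1])]
        linarith [hs.2]
      exact hball this
    rwa [hφadd, sub_add_cancel] at h1
  -- build the sequence of times
  have claim' : ∀ T : ℝ, ∃ t, max T 0 ≤ t ∧ ∀ s ∈ Icc t (t + r / 2), φ (s, x) ∈ U := by
    intro T
    obtain ⟨t, ht, hmem⟩ := claim (max T 0) (le_max_right _ _)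
    exact ⟨t, ht, hmem⟩
  choose g hg1 hg2 using claim'
  set t : ℕ → ℝ := fun n => Nat.rec (g 0) (fun _ prev => g (prev + r / 2)) n with ht_def
  have ht0 : ∀ n, 0 ≤ t n := by
    intro n
    cases n with
    | zero => exact le_trans (le_max_right _ _) (hg1 0)
    | succ k => exact le_trans (le_max_right _ _) (hg1 _)
  have htsucc : ∀ n, t n + r / 2 ≤ t (n + 1) := by
    intro n
    exact le_trans (le_max_left _ _) (hg1 (t n + r / 2))
  have htmem : ∀ n, ∀ s ∈ Icc (t n) (t n + r / 2), φ (s, x) ∈ U := by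
    intro n
    cases n with
    | zero => exact hg2 0
    | succ k => exact hg2 _
  have hmono : ∀ n m : ℕ, n < m → t n + r / 2 ≤ t m := by
    intro n m hnm
    induction m with
    | zero => omega
    | succ k ih =>
      rcases Nat.lt_succ_iff_lt_or_eq.mp hnm with h | h
      · exact le_trans (ih h) (by linarith [htsucc k])
      · subst h; exact htsucc n
  -- the union of intervals is inside the occupation set
  have hsub : (⋃ n, Ico (t n) (t n + r / 2)) ⊆ {s : ℝ | 0 ≤ s ∧ φ (s, x) ∈ U} := by
    rintro s hs
    simp only [mem_iUnion, mem_Ico] at hs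
    obtain ⟨n, h1, h2⟩ := hs
    exact ⟨le_trans (ht0 n) h1, htmem n s ⟨h1, le_of_lt h2⟩⟩
  have hdisj : Pairwise (Function.onFun Disjoint fun n => Ico (t n) (t n + r / 2)) := by
    intro i j hij
    rcases hij.lt_or_gt with h | h
    · exact Set.Ico_disjoint_Ico.mpr
        (le_trans (min_le_left _ _) (le_trans (hmono i j h) (le_max_right _ _)))
    · exact Set.Ico_disjoint_Ico.mpr
        (le_trans (min_le_right _ _) (le_trans (hmono j i h) (le_max_left _ _)))
  have hvol : volume (⋃ n, Ico (t n) (t n + r / 2)) = ⊤ := by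
    rw [measure_iUnion hdisj (fun n => measurableSet_Ico)]
    have : ∀ n : ℕ, volume (Ico (t n) (t n + r / 2)) = ENNReal.ofReal (r / 2) := by
      intro n; rw [Real.volume_Ico]; ring_nf
    rw [tsum_congr this]
    exact ENNReal.tsum_const_eq_top_of_ne_zero (ENNReal.ofReal_pos.mpr hr2).ne'
  exact top_unique (hvol ▸ measure_mono hsub)
end

section
/- Let X be a metric space, φ : ℝ × X → X a continuous flow on X, and F : X → ℝ a continuous function with F ≥ 0. Let x ∈ X be such that the function t ↦ F(φ(t,x)) is integrable on [0,∞), i.e. ∫₀^∞ F(φ(t,x)) dt < ∞. Then F(y) = 0 for every point y of the ω-limit set of x. -/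
/-!
Suppose `F y > 0`. By continuity of `(s, z) ↦ F (φ (s, z))` at `(0, y)` there is `δ > 0` such that
`F (φ (s, z)) > F y / 2` whenever `0 ≤ s ≤ δ` and `dist z y < δ`. The orbit of `x` comes within `δ`
of `y` at arbitrarily late times `t₀`, so `F (φ (t, x)) > F y / 2` on every such window
`[t₀, t₀ + δ]`, and the integral over it is at least `δ F y / 2`. This contradicts integrability,
which forces integrals over windows of fixed length to tend to `0`.
-/

open MeasureTheory Set Filter Topology

theorem tendsto_intervalIntegral_add_atTop_zero {f : ℝ → ℝ} {a : ℝ}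
    (hf : IntegrableOn f (Ici a)) (h : ℝ) :
    Tendsto (fun t => ∫ s in t..t + h, f s) atTop (𝓝 0) := by
  have hIoi : IntegrableOn f (Ioi a) := hf.mono_set Ioi_subset_Ici_self
  have hlim := intervalIntegral_tendsto_integral_Ioi a hIoi tendsto_id
  have hlim_add := intervalIntegral_tendsto_integral_Ioi a hIoi
    (tendsto_atTop_add_const_right _ h tendsto_id)
  have hdiff := hlim_add.sub hlim
  rw [sub_self] at hdiff
  refine hdiff.congr' ?_
  filter_upwards [eventually_ge_atTop a, eventually_ge_atTop (a - h)] with t hat hath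
  dsimp only [id]
  have hintegrable : ∀ b, a ≤ b → IntervalIntegrable f volume a b := fun b hab =>
    (intervalIntegrable_iff_integrableOn_Icc_of_le hab).2 (hf.mono_set Icc_subset_Ici_self)
  exact intervalIntegral.integral_interval_sub_left (hintegrable _ (by linarith)) (hintegrable _ hat)

theorem mul_le_intervalIntegral_of_le {f : ℝ → ℝ} {a h c : ℝ} (hh : 0 ≤ h)
    (hf : IntervalIntegrable f volume a (a + h)) (hc : ∀ t ∈ Icc a (a + h), c ≤ f t) :
    c * h ≤ ∫ t in a..a + h, f t := by
  have hmono := intervalIntegral.integral_mono_on (by linarith) intervalIntegrable_const hf hc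
  simpa [mul_comm] using hmono

theorem exists_pos_forall_dist_lt_of_continuousAt {X : Type*} [PseudoMetricSpace X]
    {g : ℝ × X → ℝ} {y : X} (hg : ContinuousAt g (0, y)) {c : ℝ} (hc : c < g (0, y)) :
    ∃ δ > 0, ∀ z, dist z y < δ → ∀ s ∈ Icc 0 δ, c < g (s, z) := by
  obtain ⟨ε, hε, hball⟩ := Metric.eventually_nhds_iff.1 (hg.eventually (lt_mem_nhds hc))
  refine ⟨ε / 2, by positivity, fun z hz s hs => hball ?_⟩
  rw [Prod.dist_eq, Real.dist_eq, sub_zero, abs_of_nonneg hs.1]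
  exact max_lt (by linarith [hs.2]) (by linarith)

theorem exists_ge_dist_lt_of_mem_omegaLimit {X : Type*} [PseudoMetricSpace X] {γ : ℝ → X} {y : X}
    (hy : y ∈ ⋂ T ∈ Ici (0 : ℝ), closure {z : X | ∃ t : ℝ, T ≤ t ∧ z = γ t})
    {T : ℝ} (hT : 0 ≤ T) {ε : ℝ} (hε : 0 < ε) :
    ∃ t, T ≤ t ∧ dist (γ t) y < ε := by
  have hyT := mem_iInter₂.1 hy T hT
  obtain ⟨z, ⟨t, hTt, rfl⟩, hdist⟩ := Metric.mem_closure_iff.1 hyT ε hε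
  exact ⟨t, hTt, by rwa [dist_comm]⟩

/-- If `F ≥ 0` is continuous and `t ↦ F(φ(t,x))` is integrable on `[0,∞)` for a
continuous flow `φ` on a metric space, then `F` vanishes on the ω-limit set of `x`. -/
theorem omega_limit_subset_zero_set_of_integrable
    {X : Type*} [MetricSpace X]
    (φ : ℝ × X → X) (hφ : Continuous φ)
    (hφ0 : ∀ x : X, φ (0, x) = x)
    (hφadd : ∀ (s t : ℝ) (x : X), φ (s, φ (t, x)) = φ (s + t, x))
    (F : X → ℝ) (hF : Continuous F) (hF0 : ∀ z : X, 0 ≤ F z)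
    (x : X)
    (hint : IntegrableOn (fun t : ℝ => F (φ (t, x))) (Ici (0 : ℝ)))
    (y : X)
    (hy : y ∈ ⋂ T ∈ Ici (0 : ℝ), closure {z : X | ∃ t : ℝ, T ≤ t ∧ z = φ (t, x)}) :
    F y = 0 := by
  by_contra hne
  have hpos : 0 < F y := (hF0 y).lt_of_ne' hne
  obtain ⟨δ, hδ, hnear⟩ := exists_pos_forall_dist_lt_of_continuousAt (g := F ∘ φ) (y := y)
    (hF.comp hφ).continuousAt (c := F y / 2) (by rw [Function.comp_apply, hφ0]; linarith)
  obtain ⟨T, hsmall⟩ := eventually_atTop.1 <|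
    (tendsto_intervalIntegral_add_atTop_zero hint δ).eventually (gt_mem_nhds (by positivity :
      0 < F y / 2 * δ))
  obtain ⟨t₀, hTt₀, hdist⟩ :=
    exists_ge_dist_lt_of_mem_omegaLimit hy (le_max_right T 0) hδ
  have ht₀ : 0 ≤ t₀ := le_of_max_le_right hTt₀
  have hwindow : F y / 2 * δ ≤ ∫ t in t₀..t₀ + δ, F (φ (t, x)) := by
    refine mul_le_intervalIntegral_of_le hδ.le ?_ fun t ht => ?_
    · refine (intervalIntegrable_iff_integrableOn_Icc_of_le (by linarith)).2 (hint.mono_set ?_)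
      exact (Icc_subset_Ici_iff (by linarith)).2 ht₀
    · have hshift : φ (t, x) = φ (t - t₀, φ (t₀, x)) := by rw [hφadd, sub_add_cancel]
      rw [hshift]
      exact (hnear _ hdist _ ⟨by linarith [ht.1], by linarith [ht.2]⟩).le
  linarith [hsmall t₀ (le_of_max_le_left hTt₀)]
end
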